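/- Let (U,Θ,ρ) be a probability space, N ∈ ℕ, Σ a symmetric positive definite N×N real matrix, and δ ∈ ℝ^N. Let W : U → [0,∞) be measurable with ∫_U (1 + W(z))⁴ dρ(z) < ∞, and for each ε ∈ (0,1] let G_ε : U → ℝ^N and G_0 : U → ℝ^N be measurable maps with |G_ε(z)| ≤ W(z), |G_0(z)| ≤ W(z), and |G_ε(z) − G_0(z)| ≤ W(z) ε^{1/2} for ρ-almost every z. Define Φ_ε(z) = (1/2)⟨Σ^{-1}(δ − G_ε(z)), δ − G_ε(z)⟩ (and similarly Φ_0), Z_ε = ∫_U exp(−Φ_ε) dρ, Z_0 = ∫_U exp(−Φ_0) dρ, and let μ_ε, μ_0 be the probability measures with densities dμ_ε/dρ = exp(−Φ_ε)/Z_ε and dμ_0/dρ = exp(−Φ_0)/Z_0. Then there is a constant c, depending only on ∫(1+W)⁴ dρ, |δ| and Σ, such that d_Hell(μ_ε, μ_0) ≤ c ε^{1/2} for all ε ∈ (0,1]. -/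

import Mathlib

open MeasureTheory Real Filter Matrix

/-- Euclidean norm on `ℝ^N`. -/
noncomputable def euclNorm {N : ℕ} (v : Fin N → ℝ) : ℝ := Real.sqrt (v ⬝ᵥ v)

/-- Least-squares potential `Φ(z) = ½ ⟨Σ⁻¹(δ - G z), δ - G z⟩`. -/
noncomputable def potential {U : Type*} {N : ℕ} (S : Matrix (Fin N) (Fin N) ℝ)
    (δ : Fin N → ℝ) (G : U → Fin N → ℝ) (z : U) : ℝ :=
  1 / 2 * ((S⁻¹).mulVec (δ - G z) ⬝ᵥ (δ - G z))

/-- Hellinger distance between two measures, absolutely continuous with respect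
to `ρ`, given by their densities `f, g`. -/
noncomputable def hellingerDist {U : Type*} [MeasurableSpace U] (ρ : Measure U)
    (f g : U → ℝ) : ℝ :=
  Real.sqrt (1 / 2 * ∫ z, (Real.sqrt (f z) - Real.sqrt (g z)) ^ 2 ∂ρ)

/-- Gibbs density `exp(-Φ)/Z` with `Z = ∫ exp(-Φ) dρ`. -/
noncomputable def gibbsDensity {U : Type*} [MeasurableSpace U] (ρ : Measure U)
    (Φ : U → ℝ) (z : U) : ℝ :=
  Real.exp (-Φ z) / ∫ w, Real.exp (-Φ w) ∂ρ

/-! The potentials are nonnegative quadratic forms, so the Gibbs weights `exp (-Φ)` lie in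
`(0, 1]` and `exp (-Φ / 2)` is `1/2`-Lipschitz in `Φ`. With `K = ∑ᵢⱼ |Σ⁻¹ᵢⱼ|`, both potentials
are dominated by the envelope `B = K ((|δ| + 1) (1 + W))²` and their difference by `√ε B`; `B` and
`B²` are integrable because `(1 + W)⁴` is. Hence both normalising constants lie above
`∫ exp (-B) > 0` and differ by at most `√ε ∫ B`, and splitting
`e^{-Φ/2} / √Z - e^{-Ψ/2} / √Z' = (e^{-Φ/2} - e^{-Ψ/2}) / √Z + e^{-Ψ/2} (1 / √Z - 1 / √Z')`
bounds the squared Hellinger integrand by `ε` times an integrable function of `B`. -/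

variable {N : ℕ}

lemma euclNorm_eq_norm_toLp (v : Fin N → ℝ) : euclNorm v = ‖WithLp.toLp 2 v‖ := by
  simp [EuclideanSpace.norm_eq, euclNorm, dotProduct, sq]

lemma euclNorm_nonneg (v : Fin N → ℝ) : 0 ≤ euclNorm v := Real.sqrt_nonneg _

lemma euclNorm_sub_le (a b : Fin N → ℝ) : euclNorm (a - b) ≤ euclNorm a + euclNorm b := by
  simpa only [euclNorm_eq_norm_toLp, WithLp.toLp_sub] using norm_sub_le _ _

lemma euclNorm_sub_comm (a b : Fin N → ℝ) : euclNorm (a - b) = euclNorm (b - a) := by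
  simpa only [euclNorm_eq_norm_toLp, WithLp.toLp_sub] using norm_sub_rev _ _

lemma abs_apply_le_euclNorm (v : Fin N → ℝ) (j : Fin N) : |v j| ≤ euclNorm v := by
  rw [euclNorm, ← Real.sqrt_sq_eq_abs]
  refine Real.sqrt_le_sqrt ?_
  simpa [dotProduct, sq] using
    Finset.single_le_sum (fun i _ => mul_self_nonneg (v i)) (Finset.mem_univ j)

lemma abs_mulVec_dotProduct_le (A : Matrix (Fin N) (Fin N) ℝ) (u v : Fin N → ℝ) :
    |A *ᵥ u ⬝ᵥ v| ≤ (∑ i, ∑ j, |A i j|) * (euclNorm u * euclNorm v) := by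
  have hexpand : A *ᵥ u ⬝ᵥ v = ∑ i, ∑ j, A i j * u j * v i := by
    simp [mulVec, dotProduct, Finset.sum_mul]
  rw [hexpand, Finset.sum_mul]
  refine (Finset.abs_sum_le_sum_abs _ _).trans (Finset.sum_le_sum fun i _ => ?_)
  rw [Finset.sum_mul]
  refine (Finset.abs_sum_le_sum_abs _ _).trans (Finset.sum_le_sum fun j _ => ?_)
  rw [abs_mul, abs_mul, mul_assoc]
  gcongr
  · exact euclNorm_nonneg u
  · exact abs_apply_le_euclNorm u j
  · exact abs_apply_le_euclNorm v i

lemma abs_mulVec_dotProduct_sub_le (A : Matrix (Fin N) (Fin N) ℝ) (a b : Fin N → ℝ) :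
    |A *ᵥ a ⬝ᵥ a - A *ᵥ b ⬝ᵥ b| ≤
      (∑ i, ∑ j, |A i j|) * (euclNorm (a - b) * (euclNorm a + euclNorm b)) := by
  have hsplit : A *ᵥ a ⬝ᵥ a - A *ᵥ b ⬝ᵥ b = A *ᵥ a ⬝ᵥ (a - b) + A *ᵥ (a - b) ⬝ᵥ b := by
    rw [mulVec_sub, sub_dotProduct, dotProduct_sub]
    ring
  rw [hsplit]
  refine (abs_add_le _ _).trans ?_
  have h₁ := abs_mulVec_dotProduct_le A a (a - b)
  have h₂ := abs_mulVec_dotProduct_le A (a - b) b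
  linarith

section Potential

variable {U : Type*} (S : Matrix (Fin N) (Fin N) ℝ) (δ : Fin N → ℝ)

lemma potential_nonneg (hS : S.PosDef) (G : U → Fin N → ℝ) (z : U) :
    0 ≤ potential S δ G z := by
  have h := hS.inv.posSemidef.dotProduct_mulVec_nonneg (δ - G z)
  rw [star_trivial, dotProduct_comm] at h
  exact mul_nonneg (by norm_num) h

lemma measurable_potential [MeasurableSpace U] {G : U → Fin N → ℝ} (hG : Measurable G) :
    Measurable (potential S δ G) :=
  (by fun_prop : Continuous fun v => 1 / 2 * (S⁻¹ *ᵥ (δ - v) ⬝ᵥ (δ - v))).measurable.comp hG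

noncomputable def potentialEnvelope (W : U → ℝ) (z : U) : ℝ :=
  (∑ i, ∑ j, |S⁻¹ i j|) * ((euclNorm δ + 1) * (1 + W z)) ^ 2

variable {S δ} {W : U → ℝ} {z : U}

lemma potential_le_potentialEnvelope {G : U → Fin N → ℝ} (hW : 0 ≤ W z)
    (hG : euclNorm (G z) ≤ W z) : potential S δ G z ≤ potentialEnvelope S δ W z := by
  have hK : 0 ≤ ∑ i, ∑ j, |S⁻¹ i j| := by positivity
  have hδ := euclNorm_nonneg δ
  have hres : euclNorm (δ - G z) ≤ (euclNorm δ + 1) * (1 + W z) := by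
    nlinarith [euclNorm_sub_le δ (G z)]
  have hquad := (le_abs_self _).trans (abs_mulVec_dotProduct_le S⁻¹ (δ - G z) (δ - G z))
  rw [potential, potentialEnvelope]
  nlinarith [mul_le_mul hres hres (euclNorm_nonneg _) (by positivity)]

lemma abs_potential_sub_le_potentialEnvelope {G G' : U → Fin N → ℝ} {t : ℝ} (hW : 0 ≤ W z)
    (ht : 0 ≤ t) (hG : euclNorm (G z) ≤ W z) (hG' : euclNorm (G' z) ≤ W z)
    (hGG' : euclNorm (G z - G' z) ≤ W z * t) :
    |potential S δ G z - potential S δ G' z| ≤ t * potentialEnvelope S δ W z := by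
  have hK : 0 ≤ ∑ i, ∑ j, |S⁻¹ i j| := by positivity
  have hδ := euclNorm_nonneg δ
  have hquad := abs_mulVec_dotProduct_sub_le S⁻¹ (δ - G z) (δ - G' z)
  rw [sub_sub_sub_cancel_left, euclNorm_sub_comm] at hquad
  have hres : euclNorm (δ - G z) + euclNorm (δ - G' z) ≤ 2 * (euclNorm δ + W z) := by
    linarith [euclNorm_sub_le δ (G z), euclNorm_sub_le δ (G' z)]
  have hprod : euclNorm (G z - G' z) * (euclNorm (δ - G z) + euclNorm (δ - G' z)) ≤
      2 * t * ((euclNorm δ + 1) * (1 + W z)) ^ 2 := by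
    have hW2 : W z * (euclNorm δ + W z) ≤ ((euclNorm δ + 1) * (1 + W z)) ^ 2 := by
      nlinarith [mul_nonneg hδ hW]
    calc _ ≤ W z * t * (2 * (euclNorm δ + W z)) :=
          mul_le_mul hGG' hres (add_nonneg (euclNorm_nonneg _) (euclNorm_nonneg _))
            (mul_nonneg hW ht)
      _ = 2 * t * (W z * (euclNorm δ + W z)) := by ring
      _ ≤ _ := by gcongr
  rw [potential, potential, potentialEnvelope, ← mul_sub, abs_mul, abs_of_pos one_half_pos]
  nlinarith [mul_le_mul_of_nonneg_left hprod hK]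

variable [MeasurableSpace U] {ρ : Measure U}

lemma integrable_potentialEnvelope_sq (hW : Integrable (fun z => (1 + W z) ^ 4) ρ) :
    Integrable (fun z => potentialEnvelope S δ W z ^ 2) ρ := by
  convert hW.const_mul ((∑ i, ∑ j, |S⁻¹ i j|) ^ 2 * (euclNorm δ + 1) ^ 4) using 2
  rw [potentialEnvelope]
  ring

lemma integrable_potentialEnvelope (hWm : Measurable W) (hW0 : ∀ z, 0 ≤ W z)
    (hW : Integrable (fun z => (1 + W z) ^ 4) ρ) : Integrable (potentialEnvelope S δ W) ρ := by
  have hsq : Integrable (fun z => (1 + W z) ^ 2) ρ := by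
    refine hW.mono' (by fun_prop) (Eventually.of_forall fun z => ?_)
    rw [Real.norm_of_nonneg (by positivity)]
    exact pow_le_pow_right₀ (by linarith [hW0 z]) (by norm_num)
  convert hsq.const_mul ((∑ i, ∑ j, |S⁻¹ i j|) * (euclNorm δ + 1) ^ 2) using 2
  rw [potentialEnvelope]
  ring

end Potential

section Gibbs

lemma abs_exp_neg_sub_exp_neg_le {a b : ℝ} (ha : 0 ≤ a) (hb : 0 ≤ b) :
    |exp (-a) - exp (-b)| ≤ |a - b| := by
  wlog hab : a ≤ b generalizing a b
  · rw [abs_sub_comm, abs_sub_comm a]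
    exact this hb ha (le_of_not_ge hab)
  have hea : exp (-a) ≤ 1 := exp_le_one_iff.2 (by linarith)
  have hgap : 1 - (b - a) ≤ exp (-(b - a)) := by linarith [add_one_le_exp (-(b - a))]
  have hgap1 : exp (-(b - a)) ≤ 1 := exp_le_one_iff.2 (by linarith)
  have hfactor : exp (-b) = exp (-a) * exp (-(b - a)) := by rw [← exp_add]; ring_nf
  rw [hfactor, abs_of_nonneg (by nlinarith [exp_pos (-a)]), abs_sub_comm,
    abs_of_nonneg (sub_nonneg.2 hab)]
  nlinarith [exp_pos (-a)]

lemma abs_one_div_sqrt_sub_one_div_sqrt_le {x y m : ℝ} (hm : 0 < m) (hx : m ≤ x) (hy : m ≤ y) :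
    |1 / √x - 1 / √y| ≤ |x - y| / (2 * m * √m) := by
  have hsm := Real.sqrt_pos.2 hm
  have hsx : √m ≤ √x := Real.sqrt_le_sqrt hx
  have hsy : √m ≤ √y := Real.sqrt_le_sqrt hy
  have hsx0 : 0 < √x := hsm.trans_le hsx
  have hsy0 : 0 < √y := hsm.trans_le hsy
  have hquot : ∀ a b : ℝ, 0 < a → 0 < b → 1 / a - 1 / b = (b ^ 2 - a ^ 2) / (a * b * (a + b)) := by
    intro a b ha hb
    field_simp
    ring
  have hden : 2 * m * √m ≤ √x * √y * (√x + √y) :=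
    calc 2 * m * √m = m * (2 * √m) := by ring
      _ ≤ √x * √y * (√x + √y) := by
        refine mul_le_mul ?_ (by linarith) (by positivity) (by positivity)
        exact (mul_self_sqrt hm.le).symm.le.trans (mul_le_mul hsx hsy hsm.le hsx0.le)
  rw [hquot _ _ hsx0 hsy0, sq_sqrt (hm.le.trans hx), sq_sqrt (hm.le.trans hy), abs_div,
    abs_sub_comm, abs_of_pos (show 0 < √x * √y * (√x + √y) by positivity)]
  exact div_le_div_of_nonneg_left (abs_nonneg _) (by positivity) hden

lemma sq_div_sqrt_sub_div_sqrt_le {p q x y m d e : ℝ} (hm : 0 < m) (hx : m ≤ x) (hy : m ≤ y)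
    (hq0 : 0 ≤ q) (hq1 : q ≤ 1) (hpq : |p - q| ≤ d / 2) (hxy : |x - y| ≤ e) :
    (p / √x - q / √y) ^ 2 ≤ d ^ 2 / (2 * m) + e ^ 2 / (2 * m ^ 3) := by
  have hsplit : p / √x - q / √y = (p - q) * (1 / √x) + q * (1 / √x - 1 / √y) := by ring
  have hfirst : ((p - q) * (1 / √x)) ^ 2 ≤ d ^ 2 / (4 * m) := by
    rw [mul_pow, div_pow, one_pow, Real.sq_sqrt (hm.le.trans hx), ← sq_abs]
    calc |p - q| ^ 2 * (1 / x) ≤ (d / 2) ^ 2 * (1 / m) :=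
          mul_le_mul (pow_le_pow_left₀ (abs_nonneg _) hpq 2) (one_div_le_one_div_of_le hm hx)
            (one_div_nonneg.2 (hm.le.trans hx)) (by positivity)
      _ = d ^ 2 / (4 * m) := by ring
  have hsecond : (q * (1 / √x - 1 / √y)) ^ 2 ≤ e ^ 2 / (4 * m ^ 3) := by
    have hdiff := (abs_one_div_sqrt_sub_one_div_sqrt_le hm hx hy).trans
      (div_le_div_of_nonneg_right hxy (by positivity))
    rw [mul_pow, ← sq_abs (1 / √x - 1 / √y)]
    calc q ^ 2 * |1 / √x - 1 / √y| ^ 2 ≤ 1 * (e / (2 * m * √m)) ^ 2 := by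
          gcongr
          · exact pow_le_one₀ hq0 hq1
      _ = e ^ 2 / (4 * m ^ 3) := by
          rw [div_pow, mul_pow, mul_pow, Real.sq_sqrt hm.le]
          ring
  rw [hsplit]
  calc _ ≤ 2 * (((p - q) * (1 / √x)) ^ 2 + (q * (1 / √x - 1 / √y)) ^ 2) := add_sq_le
    _ ≤ 2 * (d ^ 2 / (4 * m) + e ^ 2 / (4 * m ^ 3)) := by gcongr
    _ = _ := by ring

variable {U : Type*} [MeasurableSpace U] {ρ : Measure U}

lemma integrable_exp_neg [IsFiniteMeasure ρ] {Φ : U → ℝ} (hΦ : AEStronglyMeasurable Φ ρ)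
    (hΦ0 : ∀ᵐ z ∂ρ, 0 ≤ Φ z) : Integrable (fun z => exp (-Φ z)) ρ := by
  refine .of_bound (continuous_exp.comp_aestronglyMeasurable hΦ.neg) 1 ?_
  filter_upwards [hΦ0] with z hz
  rw [norm_of_nonneg (exp_pos _).le]
  exact exp_le_one_iff.2 (by linarith)

lemma abs_integral_exp_neg_sub_le [IsFiniteMeasure ρ] {Φ Ψ D : U → ℝ}
    (hΦ : AEStronglyMeasurable Φ ρ) (hΨ : AEStronglyMeasurable Ψ ρ)
    (hΦ0 : ∀ z, 0 ≤ Φ z) (hΨ0 : ∀ z, 0 ≤ Ψ z) (hD : Integrable D ρ)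
    (hΦΨ : ∀ᵐ z ∂ρ, |Φ z - Ψ z| ≤ D z) :
    |∫ z, exp (-Φ z) ∂ρ - ∫ z, exp (-Ψ z) ∂ρ| ≤ ∫ z, D z ∂ρ := by
  rw [← integral_sub (integrable_exp_neg hΦ (ae_of_all _ hΦ0))
    (integrable_exp_neg hΨ (ae_of_all _ hΨ0))]
  refine (abs_integral_le_integral_abs).trans
    (integral_mono_of_nonneg (ae_of_all _ fun _ => abs_nonneg _) hD ?_)
  filter_upwards [hΦΨ] with z hz
  exact (abs_exp_neg_sub_exp_neg_le (hΦ0 z) (hΨ0 z)).trans hz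

lemma integral_sq_sqrt_gibbsDensity_sub_le [IsProbabilityMeasure ρ] {Φ Ψ D : U → ℝ} {m : ℝ}
    (hΦ : AEStronglyMeasurable Φ ρ) (hΨ : AEStronglyMeasurable Ψ ρ)
    (hΦ0 : ∀ z, 0 ≤ Φ z) (hΨ0 : ∀ z, 0 ≤ Ψ z) (hm : 0 < m)
    (hZΦ : m ≤ ∫ z, exp (-Φ z) ∂ρ) (hZΨ : m ≤ ∫ z, exp (-Ψ z) ∂ρ)
    (hD : Integrable D ρ) (hD2 : Integrable (fun z => D z ^ 2) ρ)
    (hΦΨ : ∀ᵐ z ∂ρ, |Φ z - Ψ z| ≤ D z) :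
    ∫ z, (√(gibbsDensity ρ Φ z) - √(gibbsDensity ρ Ψ z)) ^ 2 ∂ρ ≤
      (∫ z, D z ^ 2 ∂ρ) / (2 * m) + (∫ z, D z ∂ρ) ^ 2 / (2 * m ^ 3) := by
  have hZ := abs_integral_exp_neg_sub_le hΦ hΨ hΦ0 hΨ0 hD hΦΨ
  have hpointwise : ∀ᵐ z ∂ρ, (√(gibbsDensity ρ Φ z) - √(gibbsDensity ρ Ψ z)) ^ 2 ≤
      D z ^ 2 / (2 * m) + (∫ z, D z ∂ρ) ^ 2 / (2 * m ^ 3) := by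
    filter_upwards [hΦΨ] with z hz
    have hhalf : |exp (-(Φ z / 2)) - exp (-(Ψ z / 2))| ≤ D z / 2 := by
      refine (abs_exp_neg_sub_exp_neg_le (by linarith [hΦ0 z]) (by linarith [hΨ0 z])).trans ?_
      rw [← sub_div, abs_div, abs_two]
      linarith
    rw [gibbsDensity, gibbsDensity, sqrt_div' _ (hm.le.trans hZΦ), sqrt_div' _ (hm.le.trans hZΨ),
      ← exp_half, ← exp_half, neg_div, neg_div]
    exact sq_div_sqrt_sub_div_sqrt_le hm hZΦ hZΨ (exp_pos _).le
      (exp_le_one_iff.2 (by linarith [hΨ0 z])) hhalf hZ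
  refine (integral_mono_of_nonneg (ae_of_all _ fun _ => sq_nonneg _)
    ((hD2.div_const _).add (integrable_const _)) hpointwise).trans_eq ?_
  simp only [Pi.add_apply]
  rw [integral_add (hD2.div_const _) (integrable_const _), integral_div, integral_const,
    probReal_univ, one_smul]

noncomputable def gibbsStabilityConst (ρ : Measure U) (B : U → ℝ) : ℝ :=
  √((∫ z, B z ^ 2 ∂ρ) / (4 * ∫ z, exp (-B z) ∂ρ) +
    (∫ z, B z ∂ρ) ^ 2 / (4 * (∫ z, exp (-B z) ∂ρ) ^ 3))

theorem hellingerDist_gibbsDensity_le [IsProbabilityMeasure ρ] {Φ Ψ B : U → ℝ} {t : ℝ}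
    (hΦ : AEStronglyMeasurable Φ ρ) (hΨ : AEStronglyMeasurable Ψ ρ)
    (hΦ0 : ∀ z, 0 ≤ Φ z) (hΨ0 : ∀ z, 0 ≤ Ψ z)
    (hΦB : ∀ᵐ z ∂ρ, Φ z ≤ B z) (hΨB : ∀ᵐ z ∂ρ, Ψ z ≤ B z)
    (hB : Integrable B ρ) (hB2 : Integrable (fun z => B z ^ 2) ρ) (ht : 0 ≤ t)
    (hΦΨ : ∀ᵐ z ∂ρ, |Φ z - Ψ z| ≤ t * B z) :
    hellingerDist ρ (gibbsDensity ρ Φ) (gibbsDensity ρ Ψ) ≤ gibbsStabilityConst ρ B * t := by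
  rw [hellingerDist, gibbsStabilityConst, ← sqrt_sq ht, ← sqrt_mul (by positivity)]
  set m := ∫ z, exp (-B z) ∂ρ
  have hexpB := integrable_exp_neg hB.aestronglyMeasurable (hΦB.mono fun z hz => (hΦ0 z).trans hz)
  have hm : 0 < m := integral_exp_pos hexpB
  have hZ {Φ : U → ℝ} (hΦ : AEStronglyMeasurable Φ ρ) (hΦ0 : ∀ z, 0 ≤ Φ z)
      (hΦB : ∀ᵐ z ∂ρ, Φ z ≤ B z) : m ≤ ∫ z, exp (-Φ z) ∂ρ :=
    integral_mono_ae hexpB (integrable_exp_neg hΦ (ae_of_all _ hΦ0))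
      (hΦB.mono fun z hz => exp_le_exp.2 (neg_le_neg hz))
  have hint := integral_sq_sqrt_gibbsDensity_sub_le hΦ hΨ hΦ0 hΨ0 hm (hZ hΦ hΦ0 hΦB)
    (hZ hΨ hΨ0 hΨB) (hB.const_mul t) (by simpa only [mul_pow] using hB2.const_mul (t ^ 2)) hΦΨ
  simp only [mul_pow, integral_const_mul] at hint
  refine sqrt_le_sqrt ?_
  calc _ ≤ 1 / 2 * ((t ^ 2 * ∫ z, B z ^ 2 ∂ρ) / (2 * m) +
        t ^ 2 * (∫ z, B z ∂ρ) ^ 2 / (2 * m ^ 3)) := by gcongr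
    _ = _ := by
        field_simp
        ring

end Gibbs

/-- Hellinger rate `O(ε^{1/2})` for Gibbs posteriors when the forward maps and
the homogenization error are dominated by an envelope `W` with
`∫ (1+W)⁴ dρ < ∞` (Gaussian-prior rate theorem). -/
theorem hellinger_rate_gaussian_prior
    {U : Type*} [MeasurableSpace U] (ρ : Measure U) [IsProbabilityMeasure ρ]
    {N : ℕ} (S : Matrix (Fin N) (Fin N) ℝ) (hS : S.PosDef) (δ : Fin N → ℝ)
    (W : U → ℝ) (hWmeas : Measurable W) (hWnn : ∀ z, 0 ≤ W z)
    (hWint : Integrable (fun z => (1 + W z) ^ 4) ρ)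
    (G : ℝ → U → Fin N → ℝ) (G0 : U → Fin N → ℝ)
    (hGmeas : ∀ ε ∈ Set.Ioc (0 : ℝ) 1, Measurable (G ε)) (hG0meas : Measurable G0)
    (hbound : ∀ ε ∈ Set.Ioc (0 : ℝ) 1, ∀ᵐ z ∂ρ, euclNorm (G ε z) ≤ W z)
    (hbound0 : ∀ᵐ z ∂ρ, euclNorm (G0 z) ≤ W z)
    (hrate : ∀ ε ∈ Set.Ioc (0 : ℝ) 1,
        ∀ᵐ z ∂ρ, euclNorm (G ε z - G0 z) ≤ W z * Real.sqrt ε) :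
    ∃ c : ℝ, ∀ ε ∈ Set.Ioc (0 : ℝ) 1,
      hellingerDist ρ (gibbsDensity ρ (potential S δ (G ε)))
          (gibbsDensity ρ (potential S δ G0))
        ≤ c * Real.sqrt ε := by
  refine ⟨gibbsStabilityConst ρ (potentialEnvelope S δ W), fun ε hε => ?_⟩
  refine hellingerDist_gibbsDensity_le
    (measurable_potential S δ (hGmeas ε hε)).aestronglyMeasurable
    (measurable_potential S δ hG0meas).aestronglyMeasurable
    (potential_nonneg S δ hS _) (potential_nonneg S δ hS _) ?_ ?_ (integrable_potentialEnvelope hWmeas hWnn hWint) (integrable_potentialEnvelope_sq hWint)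
    (Real.sqrt_nonneg ε) ?_
  · filter_upwards [hbound ε hε] with z hz
    exact potential_le_potentialEnvelope (hWnn z) hz
  · filter_upwards [hbound0] with z hz
    exact potential_le_potentialEnvelope (hWnn z) hz
  · filter_upwards [hbound ε hε, hbound0, hrate ε hε] with z hz hz0 hzε
    exact abs_potential_sub_le_potentialEnvelope (hWnn z) (Real.sqrt_nonneg ε) hz hz0 hzε
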